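/- With F and P the explicit tile and discrete set in GL_n(ℝ) defined below, the translates of F by P cover GL_n(ℝ): ⋃_{p∈P} F·p = GL_n(ℝ), where F·p = {ap : a ∈ F}. Equivalently, for every a ∈ GL_n(ℝ) there exist (unique) f ∈ F and p ∈ P with a = f·p. -/

import Mathlib

noncomputable section

/-- `M_n(ℝ)`, the `n × n` real matrices, identified with `ℝ^{n²}`. -/
abbrev Mn (n : ℕ) : Type := Matrix (Fin n) (Fin n) ℝ

/-- The tile `F ⊆ GL_n(ℝ)`: matrices `s • (k * w * y)` with `s ∈ [1,2)`,
`k` orthogonal, `w = diag(w₁, …, w_{n-1}, (w₁⋯w_{n-1})⁻¹)` with each `w_i ∈ [1,2)`,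
and `y` unit upper triangular with strict upper entries in `[0,1)`. -/
def Fset (n : ℕ) : Set (Mn n) :=
  {a | ∃ (s : ℝ) (k : Mn n) (wd : Fin n → ℝ) (y : Mn n),
    s ∈ Set.Ico (1 : ℝ) 2 ∧
    k.transpose * k = 1 ∧
    (∀ i : Fin n, (i : ℕ) < n - 1 → wd i ∈ Set.Ico (1 : ℝ) 2) ∧
    (∀ i : Fin n, (i : ℕ) = n - 1 →
      wd i = (∏ j ∈ Finset.filter (fun j : Fin n => (j : ℕ) < n - 1) Finset.univ, wd j)⁻¹) ∧
    (∀ i, y i i = 1) ∧ (∀ i j : Fin n, j < i → y i j = 0) ∧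
    (∀ i j : Fin n, i < j → y i j ∈ Set.Ico (0 : ℝ) 1) ∧
    a = s • (k * Matrix.diagonal wd * y)}

/-- The discrete set `P ⊆ GL_n(ℝ)`: matrices `2^λ • u` with `u` upper triangular,
`u_{ii} = 2^{κ_i}`, `u_{ij} = 2^{κ_j} μ_{ij}` for `i < j`, where `λ, κ_i, μ_{ij} ∈ ℤ`
and `κ₁ + ⋯ + κ_n = 0` (i.e. `κ_n = -(κ₁ + ⋯ + κ_{n-1})`). -/
def Pset (n : ℕ) : Set (Mn n) :=
  {p | ∃ (lam : ℤ) (κ : Fin n → ℤ) (μ : Fin n → Fin n → ℤ),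
    (∑ i, κ i) = 0 ∧
    p = (2 : ℝ) ^ lam • Matrix.of (fun i j : Fin n =>
      if i = j then (2 : ℝ) ^ (κ i)
      else if i < j then (2 : ℝ) ^ (κ j) * (μ i j : ℝ)
      else 0)}

/-- The enlarged tile `F_o`: as `F`, but with `s, w_i ∈ (1-ε, 2+ε)` and strict upper
entries of `y` in `(-ε, 1+ε)`. -/
def FoSet (n : ℕ) (ε : ℝ) : Set (Mn n) :=
  {a | ∃ (s : ℝ) (k : Mn n) (wd : Fin n → ℝ) (y : Mn n),
    s ∈ Set.Ioo (1 - ε) (2 + ε) ∧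
    k.transpose * k = 1 ∧
    (∀ i : Fin n, (i : ℕ) < n - 1 → wd i ∈ Set.Ioo (1 - ε) (2 + ε)) ∧
    (∀ i : Fin n, (i : ℕ) = n - 1 →
      wd i = (∏ j ∈ Finset.filter (fun j : Fin n => (j : ℕ) < n - 1) Finset.univ, wd j)⁻¹) ∧
    (∀ i, y i i = 1) ∧ (∀ i j : Fin n, j < i → y i j = 0) ∧
    (∀ i j : Fin n, i < j → y i j ∈ Set.Ioo (-ε) (1 + ε)) ∧
    a = s • (k * Matrix.diagonal wd * y)}

/-!
Write `a = k · diag(d) · Y` with `k` orthogonal, `d > 0` and `Y` unit upper triangular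
(Gram–Schmidt, here through the LDL decomposition of `aᵀa`). Factor `d = s 2^λ · w · 2^κ` with
`s ∈ [1,2)`, `wᵢ ∈ [1,2)` for `i < n`, `∏ w = 1` and `∑ κ = 0`, taking `s 2^λ = (∏ d)^{1/n}`
and binary exponents. Moving `diag(2^κ)` to the right turns `Y` into the unit upper triangular
`z = diag(2^κ) Y diag(2^κ)⁻¹`, and `z = y N` with `y` having strict upper entries in `[0,1)` and
`N` integral unit upper triangular: the entries of `y` and `N` are the fractional and integer
parts of quantities determined superdiagonal by superdiagonal.
Then `a = (s • k diag(w) y) · (2^λ • N diag(2^κ))`.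
-/

open Matrix InnerProductSpace
open scoped ComplexOrder

namespace Matrix

variable {ι R : Type*}

structure IsUnitUpperTriangular [LT ι] [Zero R] [One R] (M : Matrix ι ι R) : Prop where
  isUpperTriangular : M.IsUpperTriangular
  apply_self : ∀ i, M i i = 1

variable [LinearOrder ι]

theorem IsUpperTriangular.mul_apply_self [Fintype ι] [NonUnitalNonAssocSemiring R]
    {M N : Matrix ι ι R} (hM : M.IsUpperTriangular) (hN : N.IsUpperTriangular) (i : ι) :
    (M * N) i i = M i i * N i i := by
  rw [mul_apply]
  refine Finset.sum_eq_single i (fun l _ hli => ?_) (by simp)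
  rcases hli.lt_or_gt with h | h
  · rw [hM h, zero_mul]
  · rw [hN h, mul_zero]

namespace IsUnitUpperTriangular

variable {M N : Matrix ι ι R}

theorem mul [Fintype ι] [NonAssocSemiring R] (hM : M.IsUnitUpperTriangular)
    (hN : N.IsUnitUpperTriangular) : (M * N).IsUnitUpperTriangular where
  isUpperTriangular := hM.isUpperTriangular.mul hN.isUpperTriangular
  apply_self i := by
    rw [hM.isUpperTriangular.mul_apply_self hN.isUpperTriangular, hM.apply_self, hN.apply_self,
      one_mul]

theorem mul_apply_of_lt [Fintype ι] [LocallyFiniteOrder ι] [NonAssocSemiring R]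
    (hM : M.IsUnitUpperTriangular) (hN : N.IsUnitUpperTriangular) {i j : ι} (hij : i < j) :
    (M * N) i j = M i j + N i j + ∑ l ∈ Finset.Ioo i j, M i l * N l j := by
  have hvanish : ∀ l ∉ Finset.Icc i j, M i l * N l j = 0 := by
    intro l hl
    rcases not_and_or.mp (Finset.mem_Icc.not.mp hl) with h | h
    · rw [hM.isUpperTriangular (not_le.mp h), zero_mul]
    · rw [hN.isUpperTriangular (not_le.mp h), mul_zero]
  rw [mul_apply, ← Finset.sum_subset (Finset.subset_univ _) fun l _ hl => hvanish l hl,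
    Finset.Icc_eq_cons_Ioc hij.le, Finset.sum_cons, Finset.Ioc_eq_cons_Ioo hij, Finset.sum_cons,
    hM.apply_self, hN.apply_self, one_mul, mul_one]
  abel

theorem ext [Zero R] [One R] (hM : M.IsUnitUpperTriangular) (hN : N.IsUnitUpperTriangular)
    (h : ∀ i j, i < j → M i j = N i j) : M = N := by
  ext i j
  rcases lt_trichotomy i j with hij | rfl | hij
  · exact h i j hij
  · rw [hM.apply_self, hN.apply_self]
  · rw [hM.isUpperTriangular hij, hN.isUpperTriangular hij]

theorem det [Fintype ι] [CommRing R] (hM : M.IsUnitUpperTriangular) : M.det = 1 := by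
  rw [det_of_isUpperTriangular hM.isUpperTriangular]
  exact Finset.prod_eq_one fun i _ => hM.apply_self i

theorem inv [Fintype ι] [CommRing R] (hM : M.IsUnitUpperTriangular) :
    M⁻¹.IsUnitUpperTriangular := by
  have : Invertible M := invertibleOfIsUnitDet M (by rw [hM.det]; exact isUnit_one)
  have hinv : M⁻¹.IsUpperTriangular := blockTriangular_inv_of_blockTriangular hM.isUpperTriangular
  refine ⟨hinv, fun i => ?_⟩
  have := congrFun (congrFun (mul_inv_of_invertible M) i) i
  rwa [hM.isUpperTriangular.mul_apply_self hinv, hM.apply_self, one_mul, one_apply_eq] at this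

end IsUnitUpperTriangular

def unitUpper [Zero R] [One R] (c : ι → ι → R) : Matrix ι ι R :=
  of fun i j => if i = j then 1 else if i < j then c i j else 0

theorem unitUpper_apply_of_lt [Zero R] [One R] (c : ι → ι → R) {i j : ι} (h : i < j) :
    unitUpper c i j = c i j := by
  simp [unitUpper, h.ne, h]

theorem isUnitUpperTriangular_unitUpper [Zero R] [One R] (c : ι → ι → R) :
    (unitUpper c).IsUnitUpperTriangular where
  isUpperTriangular i j (h : j < i) := by simp [unitUpper, h.ne', h.not_gt]
  apply_self i := by simp [unitUpper]

section FractFloor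

variable {R : Type*} [Ring R] [LinearOrder R] [FloorRing R] {n : ℕ}

/-- In `z = y * N` with `y i j = fract (c i j)` and `N i j = ⌊c i j⌋` above the diagonal, entry
`(i, j)` reads `z i j = c i j + ∑_{i<l<j} y i l * N l j`; this determines `c` by recursion
on `j - i`. -/
def fractFloorCarry (z : Matrix (Fin n) (Fin n) R) (i j : Fin n) : R :=
  z i j - ∑ l ∈ (Finset.Ioo i j).attach,
    Int.fract (fractFloorCarry z i l) * ⌊fractFloorCarry z l j⌋
termination_by (j : ℕ) - i
decreasing_by
  all_goals have := Finset.mem_Ioo.mp l.2; omega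

theorem fractFloorCarry_eq (z : Matrix (Fin n) (Fin n) R) (i j : Fin n) :
    fractFloorCarry z i j = z i j -
      ∑ l ∈ Finset.Ioo i j, Int.fract (fractFloorCarry z i l) * ⌊fractFloorCarry z l j⌋ := by
  rw [fractFloorCarry, Finset.sum_attach (Finset.Ioo i j)
    (fun l => Int.fract (fractFloorCarry z i l) * (⌊fractFloorCarry z l j⌋ : R))]

theorem IsUnitUpperTriangular.exists_fract_mul_int [IsStrictOrderedRing R]
    {z : Matrix (Fin n) (Fin n) R} (hz : z.IsUnitUpperTriangular) :
    ∃ (y : Matrix (Fin n) (Fin n) R) (μ : Fin n → Fin n → ℤ), y.IsUnitUpperTriangular ∧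
      (∀ i j, i < j → y i j ∈ Set.Ico 0 1) ∧ z = y * unitUpper fun i j => (μ i j : R) := by
  refine ⟨unitUpper fun i j => Int.fract (fractFloorCarry z i j),
    fun i j => ⌊fractFloorCarry z i j⌋, isUnitUpperTriangular_unitUpper _, fun i j h => ?_, ?_⟩
  · rw [unitUpper_apply_of_lt _ h]
    exact ⟨Int.fract_nonneg _, Int.fract_lt_one _⟩
  refine hz.ext ((isUnitUpperTriangular_unitUpper _).mul (isUnitUpperTriangular_unitUpper _))
    fun i j hij => ?_
  rw [IsUnitUpperTriangular.mul_apply_of_lt (isUnitUpperTriangular_unitUpper _)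
    (isUnitUpperTriangular_unitUpper _) hij, unitUpper_apply_of_lt _ hij,
    unitUpper_apply_of_lt _ hij, Int.fract_add_floor, fractFloorCarry_eq z i j]
  refine (sub_add_cancel _ _).symm.trans (congrArg _ (Finset.sum_congr rfl fun l hl => ?_))
  rw [unitUpper_apply_of_lt _ (Finset.mem_Ioo.mp hl).1,
    unitUpper_apply_of_lt _ (Finset.mem_Ioo.mp hl).2]

end FractFloor

end Matrix

theorem LDL.lowerInv_apply_self {𝕜 ι : Type*} [RCLike 𝕜] [LinearOrder ι] [WellFoundedLT ι]
    [LocallyFiniteOrderBot ι] [Fintype ι] {S : Matrix ι ι 𝕜} (hS : S.PosDef) (i : ι) :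
    LDL.lowerInv hS i i = 1 := by
  let := Sᵀ.toNormedAddCommGroup hS.transpose
  let := Sᵀ.toInnerProductSpace hS.transpose.posSemidef
  have h := congrArg (fun v => (Pi.basisFun 𝕜 ι).repr v i)
    (gramSchmidt_def'' 𝕜 (Pi.basisFun 𝕜 ι) i)
  simp only [map_add, map_sum, map_smul, Finsupp.add_apply, Finsupp.coe_finsetSum,
    Finset.sum_apply, Finsupp.smul_apply, Module.Basis.repr_self, Finsupp.single_eq_same] at h
  rw [Finset.sum_eq_zero fun j hj => by
    rw [gramSchmidt_triangular (Finset.mem_Iio.mp hj) (Pi.basisFun 𝕜 ι), smul_zero], add_zero] at h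
  rw [Pi.basisFun_repr] at h
  exact h.symm

theorem exists_orthogonal_mul_diagonal_mul_unitUpper {ι : Type*} [LinearOrder ι]
    [WellFoundedLT ι] [LocallyFiniteOrderBot ι] [Fintype ι] {a : Matrix ι ι ℝ} (ha : a.det ≠ 0) :
    ∃ (k : Matrix ι ι ℝ) (d : ι → ℝ) (Y : Matrix ι ι ℝ), kᵀ * k = 1 ∧ (∀ i, 0 < d i) ∧
      Y.IsUnitUpperTriangular ∧ a = k * diagonal d * Y := by
  have hS : (aᵀ * a).PosDef := by
    simpa using PosDef.conjTranspose_mul_self a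
      (mulVec_injective_iff_isUnit.mpr ((isUnit_iff_isUnit_det a).mpr ha.isUnit))
  -- `A (aᵀ a) Aᵀ = diag(d²)`, so `k := a Aᵀ diag(d)⁻¹` is orthogonal and `a = k diag(d) (Aᵀ)⁻¹`.
  set A := LDL.lowerInv hS
  have hA : Aᵀ.IsUnitUpperTriangular :=
    ⟨fun i j h => LDL.lowerInv_triangular hS h, LDL.lowerInv_apply_self hS⟩
  have hD : diagonal (LDL.diagEntries hS) = A * (aᵀ * a) * Aᵀ := by
    simpa [LDL.diag] using LDL.diag_eq_lowerInv_conj hS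
  have hD_pos : ∀ i, 0 < LDL.diagEntries hS i := by
    have hAinj : Function.Injective A.vecMul := vecMul_injective_iff_isUnit.mpr
      ((isUnit_iff_isUnit_det A).mpr (by rw [← det_transpose, hA.det]; exact isUnit_one))
    have := hS.mul_mul_conjTranspose_same hAinj
    intro i
    simpa [← hD] using this.diag_pos (i := i)
  set d := fun i => √(LDL.diagEntries hS i)
  have hd : ∀ i, 0 < d i := fun i => Real.sqrt_pos.mpr (hD_pos i)
  refine ⟨a * Aᵀ * diagonal (fun i => (d i)⁻¹), d, Aᵀ⁻¹, ?_, hd, hA.inv, ?_⟩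
  · calc (a * Aᵀ * diagonal (fun i => (d i)⁻¹))ᵀ * (a * Aᵀ * diagonal (fun i => (d i)⁻¹))
        = diagonal (fun i => (d i)⁻¹) * (A * (aᵀ * a) * Aᵀ) * diagonal (fun i => (d i)⁻¹) := by
          simp only [transpose_mul, diagonal_transpose, transpose_transpose, Matrix.mul_assoc]
      _ = 1 := by
          rw [← hD, diagonal_mul_diagonal, diagonal_mul_diagonal, ← diagonal_one]
          congr 1
          funext i
          have := (hd i).ne'
          field_simp
          exact (Real.sq_sqrt (hD_pos i).le).symm
  · rw [Matrix.mul_assoc _ (diagonal (fun i => (d i)⁻¹)), diagonal_mul_diagonal,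
      show (fun i => (d i)⁻¹ * d i) = fun _ => 1 from funext fun i => inv_mul_cancel₀ (hd i).ne',
      diagonal_one, Matrix.mul_one, Matrix.mul_assoc, mul_nonsing_inv _ (by rw [hA.det]; exact isUnit_one),
      Matrix.mul_one]

theorem div_zpow_log_mem_Ico {R : Type*} [Field R] [LinearOrder R] [IsStrictOrderedRing R]
    [FloorSemiring R] {b : ℕ} (hb : 1 < b) {x : R} (hx : 0 < x) :
    x / (b : R) ^ Int.log b x ∈ Set.Ico 1 (b : R) := by
  have hb0 : (0 : R) < b := by exact_mod_cast (by omega : 0 < b)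
  have hpos : (0 : R) < (b : R) ^ Int.log b x := zpow_pos hb0 _
  constructor
  · rw [le_div_iff₀ hpos, one_mul]
    exact Int.zpow_log_le_self hb hx
  · rw [div_lt_iff₀ hpos, mul_comm, ← zpow_add_one₀ hb0.ne']
    exact Int.lt_zpow_succ_log_self hb x

theorem Finset.prod_zpow_eq_zpow_sum {ι G₀ : Type*} [CommGroupWithZero G₀] {a : G₀} (ha : a ≠ 0)
    (s : Finset ι) (κ : ι → ℤ) : ∏ i ∈ s, a ^ κ i = a ^ ∑ i ∈ s, κ i := by
  induction s using Finset.cons_induction with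
  | empty => simp
  | cons j s hj ih => rw [prod_cons, sum_cons, zpow_add₀ ha, ih]

theorem exists_mul_zpow_of_pos {ι R : Type*} [Fintype ι] [DecidableEq ι] [Field R] [LinearOrder R]
    [IsStrictOrderedRing R] [FloorSemiring R] {b : ℕ} (hb : 1 < b) {r : ι → R}
    (hr : ∀ i, 0 < r i) (i₀ : ι) :
    ∃ (w : ι → R) (κ : ι → ℤ), (∀ i ≠ i₀, w i ∈ Set.Ico 1 (b : R)) ∧ ∏ i, w i = ∏ i, r i ∧
      ∑ i, κ i = 0 ∧ ∀ i, r i = w i * (b : R) ^ κ i := by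
  have hb0 : (b : R) ≠ 0 := by exact_mod_cast (by omega : b ≠ 0)
  set κ : ι → ℤ := Function.update (fun i => Int.log b (r i)) i₀
    (-∑ i ∈ Finset.univ.erase i₀, Int.log b (r i))
  have hκ : ∑ i, κ i = 0 := by
    rw [Finset.sum_update_of_mem (Finset.mem_univ i₀), ← Finset.erase_eq, neg_add_cancel]
  refine ⟨fun i => r i / (b : R) ^ κ i, κ, fun i hi => ?_, ?_, hκ, fun i => ?_⟩
  · simp only [κ, Function.update_of_ne hi]
    exact div_zpow_log_mem_Ico hb (hr i)
  · rw [Finset.prod_div_distrib, Finset.prod_zpow_eq_zpow_sum hb0, hκ, zpow_zero, div_one]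
  · rw [div_mul_cancel₀ _ (zpow_ne_zero _ hb0)]

theorem eq_inv_prod_filter_lt_of_prod_eq_one {M : Type*} [DivisionCommMonoid M] {n : ℕ}
    {w : Fin n → M} (hw : ∏ i, w i = 1) {i : Fin n} (hi : (i : ℕ) = n - 1) :
    w i = (∏ j ∈ Finset.univ.filter (fun j : Fin n => (j : ℕ) < n - 1), w j)⁻¹ := by
  have herase : Finset.univ.erase i = Finset.univ.filter (fun j : Fin n => (j : ℕ) < n - 1) := by
    ext j
    simp only [Finset.mem_erase, Finset.mem_univ, Finset.mem_filter, and_true, true_and, ne_eq,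
      Fin.ext_iff]
    omega
  rw [← herase]
  exact eq_inv_of_mul_eq_one_left ((Finset.mul_prod_erase _ w (Finset.mem_univ i)).trans hw)

theorem exists_Fset_Pset_diagonal_decomp {n : ℕ} (hn : 1 ≤ n) {d : Fin n → ℝ} (hd : ∀ i, 0 < d i) :
    ∃ (s : ℝ) (lam : ℤ) (w : Fin n → ℝ) (κ : Fin n → ℤ), s ∈ Set.Ico 1 2 ∧
      (∀ i : Fin n, (i : ℕ) < n - 1 → w i ∈ Set.Ico 1 2) ∧
      (∀ i : Fin n, (i : ℕ) = n - 1 →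
        w i = (∏ j ∈ Finset.univ.filter (fun j : Fin n => (j : ℕ) < n - 1), w j)⁻¹) ∧
      ∑ i, κ i = 0 ∧ ∀ i, d i = s * 2 ^ lam * (w i * 2 ^ κ i) := by
  have hprod : 0 < ∏ i, d i := Finset.prod_pos fun i _ => hd i
  set c := (∏ i, d i) ^ ((n : ℝ)⁻¹)
  have hc : 0 < c := Real.rpow_pos_of_pos hprod _
  have hcn : c ^ n = ∏ i, d i := Real.rpow_inv_natCast_pow hprod.le (by omega)
  obtain ⟨w, κ, hw, hwd, hκ, hdw⟩ := exists_mul_zpow_of_pos (R := ℝ) one_lt_two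
    (fun i => div_pos (hd i) hc) (⟨n - 1, by omega⟩ : Fin n)
  simp only [Nat.cast_ofNat] at hw hdw
  have hw1 : ∏ i, w i = 1 := by
    rw [hwd, Finset.prod_div_distrib, Finset.prod_const, Finset.card_univ, Fintype.card_fin, hcn,
      div_self hprod.ne']
  refine ⟨c / 2 ^ Int.log 2 c, Int.log 2 c, w, κ, ?_, fun i hi => hw i ?_,
    fun i hi => eq_inv_prod_filter_lt_of_prod_eq_one hw1 hi, hκ, fun i => ?_⟩
  · simpa using div_zpow_log_mem_Ico (R := ℝ) one_lt_two hc
  · exact fun h => hi.ne (congrArg Fin.val h)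
  · rw [div_mul_cancel₀ _ (zpow_ne_zero _ two_ne_zero), ← hdw, mul_div_cancel₀ _ hc.ne']

theorem of_zpow_mul_eq_unitUpper_mul_diagonal {n : ℕ} (κ : Fin n → ℤ) (μ : Fin n → Fin n → ℤ) :
    of (fun i j : Fin n => if i = j then (2 : ℝ) ^ (κ i)
      else if i < j then (2 : ℝ) ^ (κ j) * (μ i j : ℝ) else 0) =
      unitUpper (fun i j => (μ i j : ℝ)) * diagonal fun i => (2 : ℝ) ^ κ i := by
  ext i j
  rw [mul_diagonal]
  rcases lt_trichotomy i j with h | rfl | h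
  · simp [unitUpper, h.ne, h, mul_comm]
  · simp [unitUpper]
  · simp [unitUpper, h.ne', h.not_gt]

theorem det_ne_zero_of_mem_Pset {n : ℕ} {p : Mn n} (hp : p ∈ Pset n) : p.det ≠ 0 := by
  obtain ⟨lam, κ, μ, -, rfl⟩ := hp
  rw [of_zpow_mul_eq_unitUpper_mul_diagonal, det_smul, det_mul,
    (isUnitUpperTriangular_unitUpper _).det, det_diagonal, one_mul]
  exact mul_ne_zero (pow_ne_zero _ (zpow_ne_zero _ two_ne_zero))
    (Finset.prod_ne_zero_iff.mpr fun i _ => zpow_ne_zero _ two_ne_zero)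

theorem det_ne_zero_of_mem_Fset {n : ℕ} {f : Mn n} (hf : f ∈ Fset n) : f.det ≠ 0 := by
  obtain ⟨s, k, w, y, hs, hk, hw, hw_last, hy_diag, hy_upper, -, rfl⟩ := hf
  have hw0 : ∀ i, w i ≠ 0 := by
    intro i
    by_cases hi : (i : ℕ) < n - 1
    · exact (zero_lt_one.trans_le (hw i hi).1).ne'
    · rw [hw_last i (by omega)]
      exact inv_ne_zero (Finset.prod_ne_zero_iff.mpr fun j hj =>
        (zero_lt_one.trans_le (hw j (Finset.mem_filter.mp hj).2).1).ne')
  have hy : y.IsUnitUpperTriangular := ⟨fun i j h => hy_upper i j h, hy_diag⟩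
  rw [det_smul, det_mul, det_mul, det_diagonal, hy.det, mul_one]
  exact mul_ne_zero (pow_ne_zero _ (zero_lt_one.trans_le hs.1).ne')
    (mul_ne_zero (det_ne_zero_of_left_inverse hk) (Finset.prod_ne_zero_iff.mpr fun i _ => hw0 i))

theorem exists_mem_Pset_mem_Fset_mul_eq {n : ℕ} (hn : 1 ≤ n) {a : Mn n} (ha : a.det ≠ 0) :
    ∃ p ∈ Pset n, ∃ f ∈ Fset n, f * p = a := by
  obtain ⟨k, d, Y, hk, hd, hY, rfl⟩ := exists_orthogonal_mul_diagonal_mul_unitUpper ha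
  obtain ⟨s, lam, w, κ, hs, hw, hw_last, hκ, hdw⟩ := exists_Fset_Pset_diagonal_decomp hn hd
  have hz : (of fun i j => (2 : ℝ) ^ (κ i - κ j) * Y i j).IsUnitUpperTriangular :=
    ⟨fun i j h => by simp [hY.isUpperTriangular h], fun i => by simp [hY.apply_self]⟩
  have hzE : (of fun i j => (2 : ℝ) ^ (κ i - κ j) * Y i j) * diagonal (fun i => (2 : ℝ) ^ κ i) =
      diagonal (fun i => (2 : ℝ) ^ κ i) * Y := by
    ext i j
    rw [mul_diagonal, diagonal_mul, of_apply, zpow_sub₀ two_ne_zero]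
    field_simp
  obtain ⟨y, μ, hy, hy_frac, hzy⟩ := hz.exists_fract_mul_int
  refine ⟨_, ⟨lam, κ, μ, hκ, rfl⟩, _, ⟨s, k, w, y, hs, hk, hw, hw_last, hy.apply_self,
    fun i j h => hy.isUpperTriangular h, hy_frac, rfl⟩, ?_⟩
  have hd_eq : d = (s * 2 ^ lam) • fun i => w i * (2 : ℝ) ^ κ i := funext hdw
  rw [of_zpow_mul_eq_unitUpper_mul_diagonal]
  calc s • (k * diagonal w * y) * ((2 : ℝ) ^ lam •
        (unitUpper (fun i j => (μ i j : ℝ)) * diagonal fun i => (2 : ℝ) ^ κ i))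
      = (s * 2 ^ lam) • (k * (diagonal w * ((y * unitUpper fun i j => (μ i j : ℝ)) *
          diagonal fun i => (2 : ℝ) ^ κ i))) := by
        rw [smul_mul_smul_comm]
        simp only [Matrix.mul_assoc]
    _ = (s * 2 ^ lam) • (k * (diagonal w * diagonal fun i => (2 : ℝ) ^ κ i) * Y) := by
        rw [← hzy, hzE]
        simp only [Matrix.mul_assoc]
    _ = k * diagonal d * Y := by
        rw [diagonal_mul_diagonal, hd_eq, diagonal_smul, Matrix.mul_smul, Matrix.smul_mul]

/-- The translates of the tile `F` by the discrete set `P` cover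
`GL_n(ℝ)`: `⋃_{p ∈ P} F·p = GL_n(ℝ)`, where `F·p = {a * p : a ∈ F}`; equivalently,
every invertible matrix `a` can be written as `a = f * p` with `f ∈ F`, `p ∈ P`. -/
theorem stmt_12 (n : ℕ) (hn : 1 ≤ n) :
    (⋃ p ∈ Pset n, (· * p) '' Fset n) = {a : Mn n | a.det ≠ 0} := by
  ext a
  simp only [Set.mem_iUnion, Set.mem_image, exists_prop, Set.mem_ofPred_eq]
  constructor
  · rintro ⟨p, hp, f, hf, rfl⟩
    rw [det_mul]
    exact mul_ne_zero (det_ne_zero_of_mem_Fset hf) (det_ne_zero_of_mem_Pset hp)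
  · exact exists_mem_Pset_mem_Fset_mul_eq hn
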